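/- arXiv:2012.02244 — 2 statements merged into one kernel-verified Lean document; each statement's English description precedes it below -/
import Mathlib

section
/- Let $(q(t), p(t))$, $1 \le n \le N$, solve the forced open Toda equations with $c > 0$, and suppose $|p_n(t)| \le M$ for $2 \le n \le N-1$ and all $t \ge 0$, and $\int_0^\infty e^{q_1-q_2}\,ds < \infty$. Then for each $2 \le n \le N-2$, $\int_0^\infty e^{q_n(s)-q_{n+1}(s)}\,ds < \infty$, and each $p_n(t)$, $2 \le n \le N-1$, converges to a limit $p_{n,\infty}$ as $t \to \infty$. -/
open Real Filter Topology MeasureTheory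

theorem forced_toda_core_momenta_converge (N : ℕ) (hN : 2 ≤ N) (c : ℝ) (hc : 0 < c)
    (q p : ℝ → ℕ → ℝ)
    (hq : ∀ t, ∀ n ∈ Finset.Icc 1 N, HasDerivAt (fun s => q s n) (p t n) t)
    (hp1 : ∀ t, HasDerivAt (fun s => p s 1) (-Real.exp (q t 1 - q t 2) - c) t)
    (hpn : ∀ t, ∀ n, 2 ≤ n → n ≤ N - 1 →
      HasDerivAt (fun s => p s n)
        (Real.exp (q t (n - 1) - q t n) - Real.exp (q t n - q t (n + 1))) t)
    (hpN : ∀ t, HasDerivAt (fun s => p s N) (Real.exp (q t (N - 1) - q t N) + c) t)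
    (M : ℝ)
    (hbdd : ∀ t ∈ Set.Ici (0 : ℝ), ∀ n, 2 ≤ n → n ≤ N - 1 → |p t n| ≤ M)
    (hint : IntegrableOn (fun s => Real.exp (q s 1 - q s 2)) (Set.Ici 0)) :
    (∀ n, 2 ≤ n → n ≤ N - 2 →
        IntegrableOn (fun s => Real.exp (q s n - q s (n + 1))) (Set.Ici 0)) ∧
      (∀ n, 2 ≤ n → n ≤ N - 1 →
        ∃ pninf : ℝ, Tendsto (fun t => p t n) atTop (𝓝 pninf)) := by
  set g : ℕ → ℝ → ℝ := fun n s => Real.exp (q s n - q s (n + 1)) with hg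
  -- continuity of g n for 1 ≤ n, n + 1 ≤ N
  have hqc : ∀ n, 1 ≤ n → n ≤ N → Continuous (fun s => q s n) := by
    intro n h1 h2
    exact continuous_iff_continuousAt.2 fun t =>
      (hq t n (Finset.mem_Icc.2 ⟨h1, h2⟩)).differentiableAt.continuousAt
  have hgc : ∀ n, 1 ≤ n → n + 1 ≤ N → Continuous (g n) := by
    intro n h1 h2
    exact Real.continuous_exp.comp ((hqc n h1 (by omega)).sub (hqc (n + 1) (by omega) h2))
  have hgpos : ∀ n s, 0 ≤ g n s := fun n s => (Real.exp_pos _).le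
  -- FTC: for 2 ≤ n ≤ N - 1 and 0 ≤ t,
  -- ∫ s in 0..t, (g (n-1) s - g n s) = p t n - p 0 n
  have ftc : ∀ n, 2 ≤ n → n ≤ N - 1 → ∀ t : ℝ, 0 ≤ t →
      (∫ s in (0:ℝ)..t, (g (n - 1) s - g n s)) = p t n - p 0 n := by
    intro n h2 hn1 t ht
    have hd : ∀ s ∈ Set.uIcc (0:ℝ) t,
        HasDerivAt (fun u => p u n) (g (n - 1) s - g n s) s := by
      intro s _
      have := hpn s n h2 hn1
      have hnn : (n - 1) + 1 = n := by omega
      simpa [hg, hnn] using this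
    have hcont : Continuous (fun s => g (n - 1) s - g n s) :=
      (hgc (n - 1) (by omega) (by omega)).sub (hgc n (by omega) (by omega))
    exact intervalIntegral.integral_eq_sub_of_hasDerivAt hd (hcont.intervalIntegrable 0 t)
  -- main integrability claim
  have key : ∀ n, 1 ≤ n → n ≤ N - 1 → IntegrableOn (g n) (Set.Ici 0) := by
    intro n hn
    induction n, hn using Nat.le_induction with
    | base => intro _; exact hint
    | succ n h1 ih =>
      intro hn1
      have hgn : IntegrableOn (g n) (Set.Ici 0) := ih (by omega)
      have h2 : 2 ≤ n + 1 := by omega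
      have hcn1 : Continuous (g (n + 1)) := hgc (n + 1) (by omega) (by omega)
      have hcn : Continuous (g n) := hgc n (by omega) (by omega)
      have hIoi : IntegrableOn (g (n + 1)) (Set.Ioi 0) := by
        apply integrableOn_Ioi_of_intervalIntegral_norm_bounded
          ((∫ s in Set.Ici (0:ℝ), g n s) + 2 * M) 0
          (fun t : ℝ => hcn1.integrableOn_Ioc) tendsto_id
        filter_upwards [eventually_ge_atTop (0:ℝ)] with t ht
        have hftc := ftc (n + 1) h2 hn1 t ht
        simp only [Nat.add_sub_cancel] at hftc
        have heq : (∫ s in (0:ℝ)..t, (g n s - g (n + 1) s)) =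
            (∫ s in (0:ℝ)..t, g n s) - ∫ s in (0:ℝ)..t, g (n + 1) s :=
          intervalIntegral.integral_sub (hcn.intervalIntegrable 0 t) (hcn1.intervalIntegrable 0 t)
        have hble : (∫ s in (0:ℝ)..t, g n s) ≤ ∫ s in Set.Ici (0:ℝ), g n s := by
          rw [intervalIntegral.integral_of_le ht]
          apply setIntegral_mono_set hgn
          · exact Filter.Eventually.of_forall fun s => hgpos n s
          · exact HasSubset.Subset.eventuallyLE fun s hs => hs.1.le
        have hb1 : |p t (n + 1)| ≤ M := hbdd t ht (n + 1) h2 hn1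
        have hb0 : |p 0 (n + 1)| ≤ M := hbdd 0 Set.self_mem_Ici (n + 1) h2 hn1
        have : (∫ s in (0:ℝ)..t, g (n + 1) s) =
            (∫ s in (0:ℝ)..t, g n s) - (p t (n + 1) - p 0 (n + 1)) := by
          rw [← hftc, heq]; ring
        have hnorm : (∫ s in (0:ℝ)..id t, ‖g (n + 1) s‖) = ∫ s in (0:ℝ)..t, g (n + 1) s := by
          simp only [id]
          congr 1
          ext s
          exact Real.norm_of_nonneg (hgpos _ s)
        rw [hnorm, this]
        have := abs_le.1 hb1
        have := abs_le.1 hb0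
        linarith
      rwa [integrableOn_Ici_iff_integrableOn_Ioi]
  -- convergence claim
  have conv : ∀ n, 2 ≤ n → n ≤ N - 1 →
      ∃ pninf : ℝ, Tendsto (fun t => p t n) atTop (𝓝 pninf) := by
    intro n h2 hn1
    have hgn1 : IntegrableOn (g (n - 1)) (Set.Ioi 0) :=
      (key (n - 1) (by omega) (by omega)).mono_set Set.Ioi_subset_Ici_self
    have hgn : IntegrableOn (g n) (Set.Ioi 0) :=
      (key n (by omega) hn1).mono_set Set.Ioi_subset_Ici_self
    have hcn1 : Continuous (g (n - 1)) := hgc (n - 1) (by omega) (by omega)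
    have hcn : Continuous (g n) := hgc n (by omega) (by omega)
    refine ⟨p 0 n + ((∫ s in Set.Ioi (0:ℝ), g (n - 1) s) - ∫ s in Set.Ioi (0:ℝ), g n s), ?_⟩
    have t1 : Tendsto (fun t : ℝ => ∫ s in (0:ℝ)..t, g (n - 1) s) atTop
        (𝓝 (∫ s in Set.Ioi (0:ℝ), g (n - 1) s)) :=
      intervalIntegral_tendsto_integral_Ioi 0 hgn1 tendsto_id
    have t2 : Tendsto (fun t : ℝ => ∫ s in (0:ℝ)..t, g n s) atTop
        (𝓝 (∫ s in Set.Ioi (0:ℝ), g n s)) :=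
      intervalIntegral_tendsto_integral_Ioi 0 hgn tendsto_id
    have := (tendsto_const_nhds.add (t1.sub t2) :
      Tendsto (fun t : ℝ => p 0 n + ((∫ s in (0:ℝ)..t, g (n - 1) s) - ∫ s in (0:ℝ)..t, g n s))
        atTop (𝓝 _))
    refine this.congr' ?_
    filter_upwards [eventually_ge_atTop (0:ℝ)] with t ht
    have hftc := ftc n h2 hn1 t ht
    have heq : (∫ s in (0:ℝ)..t, (g (n - 1) s - g n s)) =
        (∫ s in (0:ℝ)..t, g (n - 1) s) - ∫ s in (0:ℝ)..t, g n s :=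
      intervalIntegral.integral_sub (hcn1.intervalIntegrable 0 t) (hcn.intervalIntegrable 0 t)
    rw [heq] at hftc
    linarith
  exact ⟨fun n h2 hn2 => key n (by omega) (by omega), conv⟩
end

section
/- Let $L : \mathbb{R} \to M_N(\mathbb{R})$ and $B : \mathbb{R} \to M_N(\mathbb{R})$ be continuously differentiable with $\dot L(t) = L(t)B(t) - B(t)L(t)$ for all $t$. Then for every $k \in \mathbb{N}$, the trace $\operatorname{tr}(L(t)^k)$ is constant in $t$; in particular the characteristic polynomial of $L(t)$, and hence the spectrum of $L(t)$, is independent of $t$. -/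
/-! Along a Lax flow `L' = [L, B]`, every power satisfies `(L^k)' = [L^k, B]`, and a commutator
has trace zero, so each `tr (L^k)` has derivative zero. For the characteristic polynomial, Jacobi's
formula gives `d/dt det (x - L) = -tr (adj (x - L) [L, B])`, which vanishes because `adj (x - L)`
commutes with `L`; the spectrum is the root set of the characteristic polynomial. -/

open Matrix

namespace Matrix

section Calculus

variable {𝕜 : Type*} [NontriviallyNormedField 𝕜] {l m n : Type*} [Fintype m] {t : 𝕜}

theorem hasDerivAt_mul_apply {M : 𝕜 → Matrix l m 𝕜} {N : 𝕜 → Matrix m n 𝕜}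
    {M' : Matrix l m 𝕜} {N' : Matrix m n 𝕜}
    (hM : ∀ i j, HasDerivAt (fun s => M s i j) (M' i j) t)
    (hN : ∀ i j, HasDerivAt (fun s => N s i j) (N' i j) t) (i : l) (j : n) :
    HasDerivAt (fun s => (M s * N s) i j) ((M' * N t + M t * N') i j) t := by
  simp only [mul_apply, add_apply, ← Finset.sum_add_distrib]
  exact HasDerivAt.fun_sum fun k _ => (hM i k).mul (hN k j)

variable [Fintype n]

theorem hasDerivAt_trace {M : 𝕜 → Matrix n n 𝕜} {M' : Matrix n n 𝕜}
    (hM : ∀ i j, HasDerivAt (fun s => M s i j) (M' i j) t) :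
    HasDerivAt (fun s => (M s).trace) M'.trace t :=
  HasDerivAt.fun_sum fun i _ => hM i i

variable [DecidableEq n]

theorem trace_adjugate_mul (A C : Matrix n n 𝕜) :
    trace (adjugate A * C) = ∑ i, (A.updateCol i fun r => C r i).det := by
  simp_rw [← cramer_apply, cramer_eq_adjugate_mulVec, trace, diag_apply, mul_apply, mulVec]
  rfl

theorem hasDerivAt_det {M : 𝕜 → Matrix n n 𝕜} {M' : Matrix n n 𝕜}
    (hM : ∀ i j, HasDerivAt (fun s => M s i j) (M' i j) t) :
    HasDerivAt (fun s => (M s).det) (trace (adjugate (M t) * M')) t := by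
  have hsum : HasDerivAt (fun s => (M s).det)
      (∑ σ : Equiv.Perm n, (Equiv.Perm.sign σ : 𝕜) *
        ∑ i, (∏ j ∈ Finset.univ.erase i, M t (σ j) j) • M' (σ i) i) t := by
    simp_rw [det_apply']
    exact HasDerivAt.fun_sum fun σ _ =>
      (HasDerivAt.fun_finsetProd fun i _ => hM (σ i) i).const_mul _
  convert hsum using 1
  simp_rw [trace_adjugate_mul, det_apply', Finset.mul_sum]
  rw [Finset.sum_comm]
  refine Finset.sum_congr rfl fun σ _ => Finset.sum_congr rfl fun i _ => ?_
  rw [← Finset.mul_prod_erase _ _ (Finset.mem_univ i), updateCol_self, smul_eq_mul]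
  have hrest : ∏ j ∈ Finset.univ.erase i, (M t).updateCol i (fun r => M' r i) (σ j) j
      = ∏ j ∈ Finset.univ.erase i, M t (σ j) j :=
    Finset.prod_congr rfl fun j hj => by rw [updateCol_ne (Finset.ne_of_mem_erase hj)]
  rw [hrest]
  ring

end Calculus

theorem trace_mul_commutator_eq_zero {R n : Type*} [CommRing R] [Fintype n]
    {C A : Matrix n n R} (hCA : Commute C A) (B : Matrix n n R) :
    trace (C * (A * B - B * A)) = 0 := by
  rw [mul_sub, trace_sub, ← Matrix.mul_assoc, hCA.eq, Matrix.mul_assoc, trace_mul_comm A,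
    Matrix.mul_assoc, sub_self]

end Matrix

section Lax

variable {𝕜 : Type*} [RCLike 𝕜] {n : Type*} [Fintype n] [DecidableEq n]
  {L B : 𝕜 → Matrix n n 𝕜}

theorem hasDerivAt_pow_apply_of_lax
    (hLax : ∀ t i j, HasDerivAt (fun s => L s i j) ((L t * B t - B t * L t) i j) t)
    (k : ℕ) (t : 𝕜) (i j : n) :
    HasDerivAt (fun s => (L s ^ k) i j) ((L t ^ k * B t - B t * L t ^ k) i j) t := by
  induction k generalizing i j with
  | zero => simpa using hasDerivAt_const t ((1 : Matrix n n 𝕜) i j)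
  | succ k ih =>
    have hLeibniz : L t ^ (k + 1) * B t - B t * L t ^ (k + 1) =
        (L t ^ k * B t - B t * L t ^ k) * L t + L t ^ k * (L t * B t - B t * L t) := by
      rw [pow_succ]; noncomm_ring
    rw [hLeibniz]
    simp only [pow_succ]
    exact hasDerivAt_mul_apply ih (hLax t) i j

theorem trace_pow_eq_of_lax
    (hLax : ∀ t i j, HasDerivAt (fun s => L s i j) ((L t * B t - B t * L t) i j) t)
    (k : ℕ) (s t : 𝕜) : trace (L s ^ k) = trace (L t ^ k) := by
  have hderiv : ∀ u, HasDerivAt (fun r => trace (L r ^ k)) 0 u := fun u => by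
    have := hasDerivAt_trace (hasDerivAt_pow_apply_of_lax hLax k u)
    rwa [trace_sub, trace_mul_comm, sub_self] at this
  exact is_const_of_deriv_eq_zero (fun u => (hderiv u).differentiableAt)
    (fun u => (hderiv u).deriv) s t

theorem det_scalar_sub_eq_of_lax
    (hLax : ∀ t i j, HasDerivAt (fun s => L s i j) ((L t * B t - B t * L t) i j) t)
    (x s t : 𝕜) : (scalar n x - L s).det = (scalar n x - L t).det := by
  have hderiv : ∀ u, HasDerivAt (fun r => (scalar n x - L r).det) 0 u := fun u => by
    have hcomm : Commute (adjugate (scalar n x - L u)) (L u) := by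
      have hself : Commute (adjugate (scalar n x - L u)) (scalar n x - L u) :=
        (adjugate_mul _).trans (mul_adjugate _).symm
      have hscalar : Commute (adjugate (scalar n x - L u)) (scalar n x) :=
        (scalar_commute x (Commute.all x) _).symm
      simpa using hscalar.sub_right hself
    have := hasDerivAt_det (M := fun r => scalar n x - L r) (M' := -(L u * B u - B u * L u))
      (fun i j => (hLax u i j).const_sub (scalar n x i j))
    rwa [Matrix.mul_neg, trace_neg, trace_mul_commutator_eq_zero hcomm, neg_zero] at this
  exact is_const_of_deriv_eq_zero (fun u => (hderiv u).differentiableAt)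
    (fun u => (hderiv u).deriv) s t

theorem charpoly_eq_of_lax
    (hLax : ∀ t i j, HasDerivAt (fun s => L s i j) ((L t * B t - B t * L t) i j) t)
    (s t : 𝕜) : (L s).charpoly = (L t).charpoly :=
  Polynomial.funext fun x => by
    rw [eval_charpoly, eval_charpoly, det_scalar_sub_eq_of_lax hLax]

end Lax

theorem lax_isospectral_general (N : ℕ)
    (L B : ℝ → Matrix (Fin N) (Fin N) ℝ)
    (hLax : ∀ t i j, HasDerivAt (fun s => L s i j)
      ((L t * B t - B t * L t) i j) t) :
    ∀ s t : ℝ,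
      (∀ k : ℕ, Matrix.trace ((L s) ^ k) = Matrix.trace ((L t) ^ k)) ∧
      (L s).charpoly = (L t).charpoly ∧
      spectrum ℝ (L s) = spectrum ℝ (L t) := by
  intro s t
  have hcharpoly := charpoly_eq_of_lax hLax s t
  refine ⟨fun k => trace_pow_eq_of_lax hLax k s t, hcharpoly, ?_⟩
  ext x
  rw [mem_spectrum_iff_isRoot_charpoly, mem_spectrum_iff_isRoot_charpoly, hcharpoly]

theorem lax_isospectral (N : ℕ)
    (L B : ℝ → Matrix (Fin N) (Fin N) ℝ)
    (hLcont : ∀ i j, Continuous fun t => L t i j)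
    (hBcont : ∀ i j, Continuous fun t => B t i j)
    (hLax : ∀ t i j, HasDerivAt (fun s => L s i j)
      ((L t * B t - B t * L t) i j) t) :
    ∀ s t : ℝ,
      (∀ k : ℕ, Matrix.trace ((L s) ^ k) = Matrix.trace ((L t) ^ k)) ∧
      (L s).charpoly = (L t).charpoly ∧
      spectrum ℝ (L s) = spectrum ℝ (L t) :=
  lax_isospectral_general N L B hLax
end
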